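/- For i = 1, …, M, let Λᵢ ⊂ ℤⁿ be finite sets and cᵢ ∈ ℂ^{Λᵢ} nonzero coefficient vectors with associated trigonometric polynomials ψᵢ and zero sets Sᵢ. Let Λ = Λ₁ + ⋯ + Λ_M be the Minkowski sum and c = c₁ ∗ ⋯ ∗ c_M ∈ ℂ^Λ the coefficient vector of the product ψ = ψ₁ ⋯ ψ_M. Suppose for each i we are given Nᵢ points Xᵢ = {x₁⁽ⁱ⁾, …, x_{Nᵢ}⁽ⁱ⁾} ⊂ Sᵢ, and suppose that for some index j, Nⱼ ≤ |Λⱼ| − 2. Then there exists a coefficient vector c′ ∈ ℂ^Λ that is not a scalar multiple of c and satisfies (c′)ᵀ φ_Λ(x) = 0 for every sampled point x ∈ X₁ ∪ ⋯ ∪ X_M; namely, c′ = c₁ ∗ ⋯ ∗ cⱼ₋₁ ∗ cⱼ′ ∗ cⱼ₊₁ ∗ ⋯ ∗ c_M for any cⱼ′ ∈ ℂ^{Λⱼ} that annihilates the feature vectors φ_{Λⱼ}(x) of the points of Xⱼ and is not proportional to cⱼ (such cⱼ′ exists by dimension counting). In particular, the surface cannot be uniquely recovered from these samples. -/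

import Mathlib

open Complex
open scoped Real Pointwise

/-- `(c)ᵀ φ_Λ(x)`: the trig polynomial with coefficients `c` restricted to the band `Λ`. -/
noncomputable def trigPolyOn {n : ℕ} (Λ : Finset (Fin n → ℤ)) (c : (Fin n → ℤ) → ℂ)
    (x : Fin n → ℝ) : ℂ :=
  ∑ k ∈ Λ, c k * Complex.exp (2 * Real.pi * Complex.I * (∑ i, (k i : ℝ) * x i))

/-- The trigonometric polynomial associated with a finitely supported coefficient
vector `c : ℤⁿ →₀ ℂ` (an element of the group algebra `ℂ[ℤⁿ]`). -/
noncomputable def trigPolyF {n : ℕ} (c : AddMonoidAlgebra ℂ (Fin n → ℤ)) (x : Fin n → ℝ) : ℂ :=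
  ∑ k ∈ c.coeff.support, c.coeff k * Complex.exp (2 * Real.pi * Complex.I * (∑ i, (k i : ℝ) * x i))

/-- The zero set `S = {x ∈ [0,1)ⁿ : ψ(x) = 0}` of such a trigonometric polynomial. -/
def zeroSetF {n : ℕ} (c : AddMonoidAlgebra ℂ (Fin n → ℤ)) : Set (Fin n → ℝ) :=
  {x | (∀ i, 0 ≤ x i ∧ x i < 1) ∧ trigPolyF c x = 0}

/-- The evaluation character. -/
noncomputable def evChar {n : ℕ} (x : Fin n → ℝ) : Multiplicative (Fin n → ℤ) →* ℂ where
  toFun g := Complex.exp (2 * Real.pi * Complex.I *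
    (∑ i, ((Multiplicative.toAdd g) i : ℝ) * x i))
  map_one' := by simp
  map_mul' a b := by
    show Complex.exp _ = _
    rw [← Complex.exp_add, ← mul_add, ← Complex.ofReal_add, ← Finset.sum_add_distrib]
    have hsum : (∑ i, ((Multiplicative.toAdd (a * b)) i : ℝ) * x i)
        = ∑ i, (((Multiplicative.toAdd a) i : ℝ) * x i
            + ((Multiplicative.toAdd b) i : ℝ) * x i) := by
      apply Finset.sum_congr rfl
      intro i _
      have h : (Multiplicative.toAdd (a * b)) i
          = Multiplicative.toAdd a i + Multiplicative.toAdd b i := rfl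
      rw [h]
      push_cast
      ring
    rw [hsum]

/-- Evaluation as an algebra homomorphism on the group algebra. -/
noncomputable def evalHom {n : ℕ} (x : Fin n → ℝ) :
    AddMonoidAlgebra ℂ (Fin n → ℤ) →ₐ[ℂ] ℂ :=
  AddMonoidAlgebra.lift ℂ ℂ (Fin n → ℤ) (evChar x)

lemma trigPolyF_eq_evalHom {n : ℕ} (c : AddMonoidAlgebra ℂ (Fin n → ℤ)) (x : Fin n → ℝ) :
    trigPolyF c x = evalHom x c := by
  rw [evalHom, AddMonoidAlgebra.lift_apply]
  simp only [trigPolyF, Finsupp.sum, smul_eq_mul, evChar, MonoidHom.coe_mk, OneHom.coe_mk,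
    toAdd_ofAdd]

lemma trigPolyOn_eq_trigPolyF {n : ℕ} {Λ : Finset (Fin n → ℤ)}
    {c : AddMonoidAlgebra ℂ (Fin n → ℤ)} (h : c.coeff.support ⊆ Λ) (x : Fin n → ℝ) :
    trigPolyOn Λ (fun k => c.coeff k) x = trigPolyF c x := by
  unfold trigPolyOn trigPolyF
  exact (Finset.sum_subset h (fun k _ hk => by
    simp [Finsupp.notMem_support_iff.mp hk])).symm

lemma support_prod_subset {n : ℕ} {ι : Type*} [DecidableEq ι] (s : Finset ι)
    (f : ι → AddMonoidAlgebra ℂ (Fin n → ℤ)) (Λ : ι → Finset (Fin n → ℤ))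
    (h : ∀ i ∈ s, (f i).coeff.support ⊆ Λ i) :
    (∏ i ∈ s, f i).coeff.support ⊆ ∑ i ∈ s, Λ i := by
  induction s using Finset.induction with
  | empty =>
    simp only [Finset.prod_empty, Finset.sum_empty]
    rw [AddMonoidAlgebra.one_def]
    exact fun k hk => Finset.mem_zero.mpr
      (Finset.mem_singleton.mp (Finsupp.support_single_subset hk))
  | @insert a s ha ih =>
    rw [Finset.prod_insert ha, Finset.sum_insert ha]
    refine (AddMonoidAlgebra.support_coeff_mul_subset _ _).trans ?_
    exact Finset.add_subset_add (h a (Finset.mem_insert_self a s))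
      (ih fun i hi => h i (Finset.mem_insert_of_mem hi))

/-- If some component `Sⱼ` is sampled with only `Nⱼ ≤ |Λⱼ| − 2` points,
then there exists `c′ ∈ ℂ^Λ` (with `Λ = Λ₁ + ⋯ + Λ_M` the Minkowski sum) that is not a
scalar multiple of `c = c₁ ∗ ⋯ ∗ c_M` (convolution = product in the group algebra `ℂ[ℤⁿ]`)
and annihilates the feature vectors of all sampled points; namely
`c′ = c₁ ∗ ⋯ ∗ cⱼ₋₁ ∗ cⱼ′ ∗ cⱼ₊₁ ∗ ⋯ ∗ c_M` for any `cⱼ′` supported in `Λⱼ` that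
annihilates `φ_{Λⱼ}` of the points of `Xⱼ` and is not proportional to `cⱼ`
(and such a `cⱼ′` exists by dimension counting). -/
theorem statement5 {n M : ℕ}
    (Λi : Fin M → Finset (Fin n → ℤ))
    (ci : Fin M → AddMonoidAlgebra ℂ (Fin n → ℤ))
    (hci : ∀ i, ci i ≠ 0)
    (hsupp : ∀ i, (ci i).coeff.support ⊆ Λi i)
    (N : Fin M → ℕ)
    (X : (i : Fin M) → Fin (N i) → (Fin n → ℝ))
    (hX : ∀ i t, X i t ∈ zeroSetF (ci i))
    (j : Fin M)
    (hNj : (N j : ℤ) ≤ (Λi j).card - 2) :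
    -- such a `cⱼ′` exists by dimension counting:
    (∃ c'j : AddMonoidAlgebra ℂ (Fin n → ℤ), c'j.coeff.support ⊆ Λi j ∧
        (∀ t, trigPolyOn (Λi j) (fun k => c'j.coeff k) (X j t) = 0) ∧
        ¬ ∃ α : ℂ, c'j = α • ci j) ∧
    -- and for any such `cⱼ′`, the vector `c′ = c₁ ∗ ⋯ ∗ cⱼ′ ∗ ⋯ ∗ c_M` is not a scalar
    -- multiple of `c` and annihilates the feature vectors of all sampled points:
    ∀ c'j : AddMonoidAlgebra ℂ (Fin n → ℤ), c'j.coeff.support ⊆ Λi j →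
      (∀ t, trigPolyOn (Λi j) (fun k => c'j.coeff k) (X j t) = 0) →
      (¬ ∃ α : ℂ, c'j = α • ci j) →
      (¬ ∃ α : ℂ, (∏ i, Function.update ci j c'j i) = α • ∏ i, ci i) ∧
      ∀ i t, trigPolyOn (∑ i', Λi i') (fun k => (∏ i', Function.update ci j c'j i').coeff k)
        (X i t) = 0 := by
  classical
  constructor
  · -- existence by dimension counting
    set s := Λi j with hsdef
    have hcard : N j + 2 ≤ s.card := by exact_mod_cast (by linarith : (N j : ℤ) + 2 ≤ s.card)
    set E : (Fin n → ℤ) → (Fin n → ℝ) → ℂ := fun k x =>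
      Complex.exp (2 * Real.pi * Complex.I * (∑ i, (k i : ℝ) * x i)) with hE
    let L : (↥s → ℂ) →ₗ[ℂ] (Fin (N j) → ℂ) :=
      { toFun := fun v t => ∑ k ∈ s.attach, v k * E k (X j t)
        map_add' := by
          intro v w; funext t
          simp [add_mul, Finset.sum_add_distrib]
        map_smul' := by
          intro a v; funext t
          simp [Finset.mul_sum, mul_assoc] }
    have h1 : Module.finrank ℂ (↥s → ℂ) = s.card := by
      simp [Module.finrank_pi]
    have h2 : Module.finrank ℂ (LinearMap.range L) ≤ N j := by
      refine (Submodule.finrank_le _).trans ?_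
      simp [Module.finrank_pi]
    have h3 : 2 ≤ Module.finrank ℂ (LinearMap.ker L) := by
      have := LinearMap.finrank_range_add_finrank_ker L
      omega
    set w : ↥s → ℂ := fun k => (ci j).coeff k with hw
    have hker_not_le : ¬ (LinearMap.ker L ≤ Submodule.span ℂ {w}) := by
      intro hle
      have hspan1 : Module.finrank ℂ (Submodule.span ℂ ({w} : Set (↥s → ℂ))) ≤ 1 := by
        rcases eq_or_ne w 0 with h | h
        · rw [h, Submodule.span_zero_singleton]
          simp
        · exact le_of_eq (finrank_span_singleton h)
      have := Submodule.finrank_mono hle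
      omega
    obtain ⟨v, hvker, hvspan⟩ := SetLike.not_le_iff_exists.mp hker_not_le
    have hLv : L v = 0 := LinearMap.mem_ker.mp hvker
    set g : (Fin n → ℤ) → ℂ := fun k => if h : k ∈ s then v ⟨k, h⟩ else 0 with hg
    have hg0 : ∀ k, g k ≠ 0 → k ∈ s := fun k hk => by
      by_contra h; exact hk (dif_neg h)
    refine ⟨AddMonoidAlgebra.ofCoeff (Finsupp.onFinset s g hg0), Finsupp.support_onFinset_subset (hf := hg0), ?_, ?_⟩
    · intro t
      have e2 : ∀ k : ↥s, g ↑k = v k := fun k => dif_pos k.2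
      calc trigPolyOn s (fun k => (Finsupp.onFinset s g hg0) k) (X j t)
          = ∑ k ∈ s, g k * E k (X j t) := rfl
        _ = ∑ k ∈ s.attach, g ↑k * E ↑k (X j t) :=
            (Finset.sum_attach s fun k => g k * E k (X j t)).symm
        _ = ∑ k ∈ s.attach, v k * E ↑k (X j t) :=
            Finset.sum_congr rfl fun k _ => by rw [e2 k]
        _ = 0 := congrFun hLv t
    · rintro ⟨α, hα⟩
      apply hvspan
      rw [Submodule.mem_span_singleton]
      refine ⟨α, ?_⟩
      funext k
      have h : (Finsupp.onFinset s g hg0) (↑k : Fin n → ℤ) = (α • (ci j).coeff) ↑k := by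
          rw [← AddMonoidAlgebra.coeff_smul, ← hα]
      rw [Finsupp.onFinset_apply, Finsupp.smul_apply, smul_eq_mul] at h
      show α * (ci j).coeff ↑k = v k
      rw [← h]
      exact dif_pos k.2
  · -- the general statement
    intro c'j hsupp' hzero hprop
    have hQ : (∏ i ∈ Finset.univ \ {j}, ci i) ≠ 0 :=
      Finset.prod_ne_zero_iff.mpr fun i _ => hci i
    constructor
    · rintro ⟨α, hα⟩
      apply hprop
      refine ⟨α, ?_⟩
      rw [Finset.prod_update_of_mem (Finset.mem_univ j),
        Finset.prod_eq_mul_prod_sdiff_singleton_of_mem (Finset.mem_univ j) ci,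
        ← smul_mul_assoc] at hα
      exact mul_right_cancel₀ hQ hα
    · intro i t
      have hsub : (∏ i', Function.update ci j c'j i').coeff.support ⊆ ∑ i', Λi i' := by
        apply support_prod_subset
        intro i' _
        rcases eq_or_ne i' j with rfl | h
        · rw [Function.update_self]; exact hsupp'
        · rw [Function.update_of_ne h]; exact hsupp i'
      rw [trigPolyOn_eq_trigPolyF hsub, trigPolyF_eq_evalHom, map_prod]
      apply Finset.prod_eq_zero (Finset.mem_univ i)
      rcases eq_or_ne i j with rfl | h
      · rw [Function.update_self, ← trigPolyF_eq_evalHom,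
          ← trigPolyOn_eq_trigPolyF hsupp']
        exact hzero t
      · rw [Function.update_of_ne h, ← trigPolyF_eq_evalHom]
        exact (hX i t).2
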